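/- For integers a < b and functions f, g : ℤ → ℝ, and α : ℤ → ℝ with 0 < α(t) ≤ 1, one has ∑_{t=a+1}^{b-1} f(t) · [ (1/Γ(α(t))) ∑_{s=t}^{b-1} (s-t+1)^{\overline{α(t)-1}} g(s) ] = ∑_{t=a+1}^{b-1} g(t) · [ ∑_{s=a+1}^{t} (t-s+1)^{\overline{α(s)-1}} f(s) / Γ(α(s)) ]. -/

import Mathlib

/-- Generalized rising factorial `x^{\overline{β}} = Γ(x+β)/Γ(x)`. -/
noncomputable def rise (x β : ℝ) : ℝ := Real.Gamma (x + β) / Real.Gamma x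

theorem Finset.sum_Icc_Icc_comm {ι M : Type*} [Preorder ι] [LocallyFiniteOrder ι] [AddCommMonoid M]
    (a b : ι) (f : ι → ι → M) :
    ∑ i ∈ Icc a b, ∑ j ∈ Icc i b, f i j = ∑ j ∈ Icc a b, ∑ i ∈ Icc a j, f i j :=
  sum_comm' fun i j => by
    simp only [mem_Icc]
    exact ⟨fun ⟨⟨hai, _⟩, hij, hjb⟩ => ⟨⟨hai, hij⟩, hai.trans hij, hjb⟩,
      fun ⟨⟨hai, hij⟩, _, hjb⟩ => ⟨⟨hai, hij.trans hjb⟩, hij, hjb⟩⟩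

theorem sum_by_parts_typeI_right_typeII_left
    (a b : ℤ) (f g : ℤ → ℝ) (α : ℤ → ℝ) :
    ∑ t ∈ Finset.Icc (a + 1) (b - 1), f t *
      ((1 / Real.Gamma (α t)) *
        ∑ s ∈ Finset.Icc t (b - 1), rise ((s : ℝ) - t + 1) (α t - 1) * g s)
    = ∑ t ∈ Finset.Icc (a + 1) (b - 1), g t *
      (∑ s ∈ Finset.Icc (a + 1) t,
        rise ((t : ℝ) - s + 1) (α s - 1) * f s / Real.Gamma (α s)) := by
  simp_rw [Finset.mul_sum]
  rw [Finset.sum_Icc_Icc_comm]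
  refine Finset.sum_congr rfl fun s _ => Finset.sum_congr rfl fun t _ => ?_
  ring
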